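/- arXiv:2407.21549 — 6 statements merged into one kernel-verified Lean document; each statement's English description precedes it below -/
import Mathlib

section
/- Let r₁ > 0, λ₁ < -r₁, and c_A > 2√(-λ₁). For c with 2√r₁ ≤ c < c_A, the inequality √(c² - 4r₁) ≥ c - c_A + 2√(-λ₁ - r₁) holds if and only if either c_A ≥ 2√r₁ + 2√(-λ₁ - r₁), or (c_A < 2√r₁ + 2√(-λ₁ - r₁) and c ≥ F(c_A)), where F(c_A) = (c_A - 2√(-λ₁ - r₁))/2 + 2r₁/(c_A - 2√(-λ₁ - r₁)). -/
open Real

theorem sqrt_ineq_iff (r₁ lam1 c_A c : ℝ) (hr : 0 < r₁) (hl : lam1 < -r₁)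
    (hcA : 2 * Real.sqrt (-lam1) < c_A)
    (hc1 : 2 * Real.sqrt r₁ ≤ c) (hc2 : c < c_A) :
    (Real.sqrt (c ^ 2 - 4 * r₁) ≥ c - c_A + 2 * Real.sqrt (-lam1 - r₁)) ↔
      (c_A ≥ 2 * Real.sqrt r₁ + 2 * Real.sqrt (-lam1 - r₁) ∨
        (c_A < 2 * Real.sqrt r₁ + 2 * Real.sqrt (-lam1 - r₁) ∧
          c ≥ (c_A - 2 * Real.sqrt (-lam1 - r₁)) / 2
              + 2 * r₁ / (c_A - 2 * Real.sqrt (-lam1 - r₁)))) := by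
  set t := Real.sqrt (-lam1 - r₁) with ht
  set s := Real.sqrt r₁ with hs
  have hs0 : 0 ≤ s := Real.sqrt_nonneg _
  have hs2 : s ^ 2 = r₁ := Real.sq_sqrt hr.le
  have htpos : (0:ℝ) < -lam1 - r₁ := by linarith
  have ht2 : t ^ 2 = -lam1 - r₁ := Real.sq_sqrt htpos.le
  have ht0 : 0 ≤ t := Real.sqrt_nonneg _
  have hlt : t < Real.sqrt (-lam1) := by
    apply Real.sqrt_lt_sqrt htpos.le
    linarith
  have hl0 : 0 ≤ Real.sqrt (-lam1) := Real.sqrt_nonneg _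
  have hd : 0 < c_A - 2 * t := by linarith
  set d := c_A - 2 * t with hdd
  have hX : 0 ≤ c ^ 2 - 4 * r₁ := by nlinarith
  have hrw : c - c_A + 2 * t = c - d := by rw [hdd]; ring
  -- key equivalence when 0 ≤ c - d
  have sq_iff : ∀ hcd : d ≤ c, (c - d ≤ Real.sqrt (c ^ 2 - 4 * r₁) ↔
      (c - d) ^ 2 ≤ c ^ 2 - 4 * r₁) := by
    intro hcd
    constructor
    · intro h
      have := Real.sq_sqrt hX
      nlinarith [Real.sqrt_nonneg (c ^ 2 - 4 * r₁)]
    · intro h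
      have h2 : Real.sqrt ((c - d) ^ 2) ≤ Real.sqrt (c ^ 2 - 4 * r₁) :=
        Real.sqrt_le_sqrt h
      rwa [Real.sqrt_sq (by linarith)] at h2
  by_cases hcase : c_A ≥ 2 * s + 2 * t
  · constructor
    · intro _; exact Or.inl hcase
    · intro _
      rw [ge_iff_le, hrw]
      have hds : 2 * s ≤ d := by rw [hdd]; linarith
      by_cases hcd : c ≤ d
      · have hle : c - d ≤ 0 := by linarith
        exact le_trans hle (Real.sqrt_nonneg _)
      · push_neg at hcd
        rw [sq_iff hcd.le]
        nlinarith
  · push_neg at hcase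
    have hds : d < 2 * s := by rw [hdd]; linarith
    have hcd : d < c := by linarith
    have hFeq : d / 2 + 2 * r₁ / d = (d ^ 2 + 4 * r₁) / (2 * d) := by
      field_simp; ring
    constructor
    · intro h
      refine Or.inr ⟨hcase, ?_⟩
      rw [hrw] at h
      rw [ge_iff_le] at h
      rw [sq_iff hcd.le] at h
      rw [ge_iff_le, hFeq, div_le_iff₀ (by linarith)]
      nlinarith
    · rintro (h | ⟨-, h⟩)
      · linarith
      · rw [ge_iff_le, hFeq, div_le_iff₀ (by linarith)] at h
        rw [ge_iff_le, hrw, sq_iff hcd.le]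
        nlinarith
end

section
/- Let 0 < max(r₁,r₃) < r₂ and set λ̄ = min(-max(r₁,r₃), π²/L² - r₂) for a given L > 0. The function G(λ) = cot(L√(r₂+λ)) - (r₂+λ - √((r₁+λ)(r₃+λ)))/(√(r₂+λ)(√(-r₁-λ) + √(-r₃-λ))) is strictly decreasing on (-r₂, λ̄) and tends to +∞ as λ → -r₂⁺. -/
/-!
Write `p = √(r₂ + λ)`, `q = √(-r₁ - λ)`, `r = √(-r₃ - λ)`. Then the subtracted term of `G` is
`(p² - q r) / (p (q + r)) = p / (q + r) - 1 / (p (1/q + 1/r))`, and as `λ` grows `p` grows while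
`q` and `r` shrink, so both pieces increase. The cotangent term decreases because `L p` increases
inside `(0, π)`. Near `λ = -r₂` both `cot (L p)` and `-(p² - q r) / (p (q + r))` are a positive
quantity over one that tends to `0⁺`.
-/

open Real Set Filter Topology

theorem Real.cot_eq_tan_pi_div_two_sub (x : ℝ) : cot x = tan (π / 2 - x) := by
  rw [tan_pi_div_two_sub, ← cot_inv_eq_tan, inv_inv]

theorem Real.strictAntiOn_cot : StrictAntiOn cot (Ioo 0 π) := fun x hx y hy hxy => by
  rw [cot_eq_tan_pi_div_two_sub, cot_eq_tan_pi_div_two_sub]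
  exact strictMonoOn_tan ⟨by linarith [hy.2], by linarith [hy.1]⟩
    ⟨by linarith [hx.2], by linarith [hx.1]⟩ (by linarith)

theorem ContinuousAt.tendsto_nhdsGT_of_lt_on_Ioo {α β : Type*} [TopologicalSpace α]
    [LinearOrder α] [OrderTopology α] [TopologicalSpace β] [Preorder β] {f : α → β} {a b : α}
    (hf : ContinuousAt f a) (hab : a < b) (hlt : ∀ x ∈ Ioo a b, f a < f x) :
    Tendsto f (𝓝[>] a) (𝓝[>] (f a)) :=
  tendsto_nhdsWithin_of_tendsto_nhds_of_eventually_within f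
    (hf.tendsto.mono_left nhdsWithin_le_nhds) (Filter.mem_of_superset (Ioo_mem_nhdsGT hab) hlt)

theorem Filter.Tendsto.pos_div_nhdsGT_zero {α 𝕜 : Type*} [Field 𝕜] [LinearOrder 𝕜]
    [IsStrictOrderedRing 𝕜] [TopologicalSpace 𝕜] [OrderTopology 𝕜] {l : Filter α}
    {f g : α → 𝕜} {c : 𝕜} (hc : 0 < c) (hf : Tendsto f l (𝓝 c)) (hg : Tendsto g l (𝓝[>] 0)) :
    Tendsto (fun x => f x / g x) l atTop := by
  simpa only [div_eq_mul_inv, Function.comp_def] using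
    hf.pos_mul_atTop hc (tendsto_inv_nhdsGT_zero.comp hg)

theorem Real.tendsto_cot_nhdsGT_zero : Tendsto cot (𝓝[>] 0) atTop := by
  have hsin : Tendsto sin (𝓝[>] 0) (𝓝[>] 0) := by
    simpa using continuous_sin.continuousAt.tendsto_nhdsGT_of_lt_on_Ioo pi_pos
      fun x hx => by simpa using sin_pos_of_pos_of_lt_pi hx.1 hx.2
  have hcos : Tendsto cos (𝓝[>] 0) (𝓝 1) := by
    simpa using (continuous_cos.tendsto 0).mono_left nhdsWithin_le_nhds
  simpa only [← cot_eq_cos_div_sin] using hcos.pos_div_nhdsGT_zero one_pos hsin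

theorem sq_sub_mul_div_mul_add_eq {𝕜 : Type*} [Field 𝕜] {p q r : 𝕜} (hp : p ≠ 0) (hq : q ≠ 0)
    (hr : r ≠ 0) (hqr : q + r ≠ 0) :
    (p ^ 2 - q * r) / (p * (q + r)) = p / (q + r) - (p * (q⁻¹ + r⁻¹))⁻¹ := by
  rw [inv_add_inv hq hr]
  field_simp

theorem sq_sub_mul_div_mul_add_lt {p₁ p₂ q₁ q₂ r₁ r₂ : ℝ} (hp₁ : 0 < p₁) (hq₂ : 0 < q₂)
    (hr₂ : 0 < r₂) (hp : p₁ < p₂) (hq : q₂ < q₁) (hr : r₂ < r₁) :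
    (p₁ ^ 2 - q₁ * r₁) / (p₁ * (q₁ + r₁)) < (p₂ ^ 2 - q₂ * r₂) / (p₂ * (q₂ + r₂)) := by
  have hq₁ : 0 < q₁ := hq₂.trans hq
  have hr₁ : 0 < r₁ := hr₂.trans hr
  have hp₂ : 0 < p₂ := hp₁.trans hp
  rw [sq_sub_mul_div_mul_add_eq hp₁.ne' hq₁.ne' hr₁.ne' (by positivity),
    sq_sub_mul_div_mul_add_eq hp₂.ne' hq₂.ne' hr₂.ne' (by positivity)]
  gcongr

theorem strictAntiOn_cot_mul_sqrt {L : ℝ} (hL : 0 < L) (c : ℝ) :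
    StrictAntiOn (fun lam => cot (L * √(c + lam))) (Ioo (-c) (π ^ 2 / L ^ 2 - c)) := by
  refine strictAntiOn_cot.comp_strictMonoOn (fun x hx y hy hxy => ?_) fun x hx => ?_
  · gcongr
    linarith [hx.1]
  · have hπL : √(c + x) < π / L := by
      rw [sqrt_lt' (by positivity), div_pow]
      linarith [hx.2]
    refine ⟨mul_pos hL (sqrt_pos.2 (by linarith [hx.1])), ?_⟩
    calc L * √(c + x) < L * (π / L) := by gcongr
      _ = π := by field_simp

theorem tendsto_cot_mul_sqrt {L : ℝ} (hL : 0 < L) (c : ℝ) :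
    Tendsto (fun lam => cot (L * √(c + lam))) (𝓝[>] (-c)) atTop := by
  refine tendsto_cot_nhdsGT_zero.comp ?_
  have hcont : ContinuousAt (fun lam => L * √(c + lam)) (-c) := by fun_prop
  simpa using hcont.tendsto_nhdsGT_of_lt_on_Ioo (lt_add_one (-c)) fun x hx => by
    simpa using mul_pos hL (sqrt_pos.2 (by linarith [hx.1] : 0 < c + x))

noncomputable def rootRatio (r₁ r₂ r₃ lam : ℝ) : ℝ :=
  (r₂ + lam - √((r₁ + lam) * (r₃ + lam))) / (√(r₂ + lam) * (√(-r₁ - lam) + √(-r₃ - lam)))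

theorem rootRatio_eq {r₁ r₂ r₃ lam : ℝ} (hlam₂ : -r₂ ≤ lam) (hlam₁ : lam ≤ -r₁) :
    rootRatio r₁ r₂ r₃ lam = (√(r₂ + lam) ^ 2 - √(-r₁ - lam) * √(-r₃ - lam)) /
      (√(r₂ + lam) * (√(-r₁ - lam) + √(-r₃ - lam))) := by
  rw [rootRatio, sq_sqrt (by linarith), ← sqrt_mul (by linarith)]
  ring_nf

theorem strictMonoOn_rootRatio (r₁ r₂ r₃ : ℝ) :
    StrictMonoOn (rootRatio r₁ r₂ r₃) (Ioo (-r₂) (-max r₁ r₃)) := by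
  intro x ⟨hx₂, hx⟩ y ⟨hy₂, hy⟩ hxy
  rw [lt_neg, max_lt_iff] at hx hy
  rw [rootRatio_eq hx₂.le (by linarith), rootRatio_eq (hx₂.trans hxy).le (by linarith)]
  apply sq_sub_mul_div_mul_add_lt <;> first
    | exact sqrt_pos.2 (by linarith)
    | exact sqrt_lt_sqrt (by linarith) (by linarith)

theorem tendsto_neg_rootRatio {r₁ r₂ r₃ : ℝ} (h : max r₁ r₃ < r₂) :
    Tendsto (fun lam => -rootRatio r₁ r₂ r₃ lam) (𝓝[>] (-r₂)) atTop := by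
  rw [max_lt_iff] at h
  have hnum : Tendsto (fun lam => √((r₁ + lam) * (r₃ + lam)) - (r₂ + lam)) (𝓝[>] (-r₂))
      (𝓝 √((r₁ - r₂) * (r₃ - r₂))) := by
    have hcont : Continuous fun lam => √((r₁ + lam) * (r₃ + lam)) - (r₂ + lam) := by fun_prop
    simpa [← sub_eq_add_neg] using
      hcont.continuousAt.tendsto.mono_left (nhdsWithin_le_nhds (a := -r₂))
  have hden : Tendsto (fun lam => √(r₂ + lam) * (√(-r₁ - lam) + √(-r₃ - lam))) (𝓝[>] (-r₂))
      (𝓝[>] 0) := by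
    have hcont : ContinuousAt (fun lam => √(r₂ + lam) * (√(-r₁ - lam) + √(-r₃ - lam))) (-r₂) :=
      by fun_prop
    simpa using hcont.tendsto_nhdsGT_of_lt_on_Ioo (by linarith : -r₂ < -r₁) fun x hx => by
      simp only [add_neg_cancel, sqrt_zero, zero_mul]
      exact mul_pos (sqrt_pos.2 (by linarith [hx.1]))
        (add_pos_of_pos_of_nonneg (sqrt_pos.2 (by linarith [hx.2])) (sqrt_nonneg _))
  have hpos : 0 < √((r₁ - r₂) * (r₃ - r₂)) :=
    sqrt_pos.2 (mul_pos_of_neg_of_neg (by linarith) (by linarith))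
  simpa only [rootRatio, ← neg_div, neg_sub] using hnum.pos_div_nhdsGT_zero hpos hden

theorem G_strictAnti_tendsto_general (r₁ r₂ r₃ L : ℝ)
    (h2 : max r₁ r₃ < r₂) (hL : 0 < L)
    (lamBar : ℝ) (hlamBar : lamBar = min (-(max r₁ r₃)) (Real.pi ^ 2 / L ^ 2 - r₂))
    (G : ℝ → ℝ)
    (hG : ∀ lam, G lam = Real.cot (L * Real.sqrt (r₂ + lam))
        - (r₂ + lam - Real.sqrt ((r₁ + lam) * (r₃ + lam)))
          / (Real.sqrt (r₂ + lam) * (Real.sqrt (-r₁ - lam) + Real.sqrt (-r₃ - lam)))) :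
    StrictAntiOn G (Set.Ioo (-r₂) lamBar) ∧
      Filter.Tendsto G (nhdsWithin (-r₂) (Set.Ioi (-r₂))) Filter.atTop := by
  obtain rfl : G = fun lam => cot (L * √(r₂ + lam)) - rootRatio r₁ r₂ r₃ lam := funext hG
  subst hlamBar
  have hcot := (strictAntiOn_cot_mul_sqrt hL r₂).mono
    (Ioo_subset_Ioo_right (min_le_right (-max r₁ r₃) _))
  have hratio := (strictMonoOn_rootRatio r₁ r₂ r₃).mono
    (Ioo_subset_Ioo_right (min_le_left _ (π ^ 2 / L ^ 2 - r₂)))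
  refine ⟨fun x hx y hy hxy => sub_lt_sub (hcot hx hy hxy) (hratio hx hy hxy), ?_⟩
  simpa only [sub_eq_add_neg] using
    (tendsto_cot_mul_sqrt hL r₂).atTop_add_atTop (tendsto_neg_rootRatio h2)

theorem G_strictAnti_tendsto (r₁ r₂ r₃ L : ℝ) (h1 : 0 < r₁) (h3 : 0 < r₃)
    (h2 : max r₁ r₃ < r₂) (hL : 0 < L)
    (lamBar : ℝ) (hlamBar : lamBar = min (-(max r₁ r₃)) (Real.pi ^ 2 / L ^ 2 - r₂))
    (G : ℝ → ℝ)
    (hG : ∀ lam, G lam = Real.cot (L * Real.sqrt (r₂ + lam))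
        - (r₂ + lam - Real.sqrt ((r₁ + lam) * (r₃ + lam)))
          / (Real.sqrt (r₂ + lam) * (Real.sqrt (-r₁ - lam) + Real.sqrt (-r₃ - lam)))) :
    StrictAntiOn G (Set.Ioo (-r₂) lamBar) ∧
      Filter.Tendsto G (nhdsWithin (-r₂) (Set.Ioi (-r₂))) Filter.atTop :=
  G_strictAnti_tendsto_general r₁ r₂ r₃ L h2 hL lamBar hlamBar G hG
end

section
/- Let 0 < max(r₁,r₃) < r₂, let L̲ be as in the definition (L̲ = 0 if r₁ = r₃, and L̲ = arccot(√((r₂-max(r₁,r₃))/|r₁-r₃|))/√(r₂-max(r₁,r₃)) otherwise), and let L > L̲. Then the function G(λ) = cot(L√(r₂+λ)) - (r₂+λ - √((r₁+λ)(r₃+λ)))/(√(r₂+λ)(√(-r₁-λ)+√(-r₃-λ))) has a unique zero in the interval (-r₂, min(-max(r₁,r₃), π²/L² - r₂)). -/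
open Real Set

noncomputable def arccot (x : ℝ) : ℝ := Real.pi / 2 - Real.arctan x

/-!
Write `s = √(r₂ + λ)`, `a = √(-r₁ - λ)`, `b = √(-r₃ - λ)`. The fraction in `G` is
`(s² - ab) / (s (a + b)) = cot (arctan (a / s) + arctan (b / s))`, and on the interval both this
angle and `L s` lie in `(0, π)`, where `cot` is injective. Hence the zeros of `G` are those of the
phase `L s - arctan (a / s) - arctan (b / s)`, which is continuous and strictly increasing, tends to
`-π` at `-r₂`, and is positive at the right endpoint: at `π² / L² - r₂` because `L s = π` there, and
at `-max r₁ r₃` exactly because `L > L̲`.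
-/

open Filter Topology

namespace Real

lemma cot_eq_tan_pi_div_two_sub_s9 (x : ℝ) : cot x = tan (π / 2 - x) := by
  rw [tan_pi_div_two_sub, cot_eq_cos_div_sin, tan_eq_sin_div_cos, inv_div]

lemma injOn_cot : InjOn cot (Ioo 0 π) := by
  intro x hx y hy hxy
  rw [cot_eq_tan_pi_div_two_sub_s9, cot_eq_tan_pi_div_two_sub_s9] at hxy
  have := injOn_tan ⟨by linarith [hx.2], by linarith [hx.1]⟩
    ⟨by linarith [hy.2], by linarith [hy.1]⟩ hxy
  linarith

lemma cot_arctan_add (x y : ℝ) : cot (arctan x + arctan y) = (1 - x * y) / (x + y) := by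
  have hx : √(1 + x ^ 2) ≠ 0 := (sqrt_pos.2 (by positivity)).ne'
  have hy : √(1 + y ^ 2) ≠ 0 := (sqrt_pos.2 (by positivity)).ne'
  rw [cot_eq_cos_div_sin, cos_add, sin_add, sin_arctan, cos_arctan, sin_arctan, cos_arctan]
  field_simp

lemma arctan_add_arctan_mem_Ioo {x y : ℝ} (hx : 0 < x) (hy : 0 < y) :
    arctan x + arctan y ∈ Ioo 0 π := by
  constructor
  · linarith [arctan_pos.2 hx, arctan_pos.2 hy]
  · linarith [arctan_lt_pi_div_two x, arctan_lt_pi_div_two y]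

end Real

lemma arccot_sqrt_div {p q : ℝ} (hp : 0 < p) (hq : 0 < q) :
    arccot (√(p / q)) = arctan (√q / √p) := by
  rw [arccot, ← arctan_inv_of_pos (sqrt_pos.2 (div_pos hp hq)), ← sqrt_inv, inv_div,
    sqrt_div' _ hp.le]

lemma exists_mem_Ioo_eq_zero_of_tendsto {α δ : Type*} [ConditionallyCompleteLinearOrder α]
    [TopologicalSpace α] [OrderTopology α] [DenselyOrdered α] [LinearOrder δ]
    [TopologicalSpace δ] [OrderTopology δ] [Zero δ] {f : α → δ} {a b : α} {l : δ}
    (hab : a < b) (hf : ContinuousOn f (Ioc a b)) (hl : Tendsto f (𝓝[>] a) (𝓝 l)) (hl0 : l < 0)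
    (hb : 0 < f b) : ∃ c ∈ Ioo a b, f c = 0 := by
  have : (𝓝[>] a).NeBot := nhdsGT_neBot_of_exists_gt ⟨b, hab⟩
  obtain ⟨x, hfx, hx⟩ := ((hl.eventually (gt_mem_nhds hl0)).and (Ioo_mem_nhdsGT hab)).exists
  obtain ⟨c, hc, hfc⟩ :=
    intermediate_value_Ioo hx.2.le (hf.mono (Icc_subset_Ioc hx.1 le_rfl)) ⟨hfx, hb⟩
  exact ⟨c, ⟨hx.1.trans hc.1, hc.2⟩, hfc⟩

noncomputable def phase (r₁ r₂ r₃ L lam : ℝ) : ℝ :=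
  L * √(r₂ + lam) - arctan (√(-r₁ - lam) / √(r₂ + lam)) - arctan (√(-r₃ - lam) / √(r₂ + lam))

section Phase

variable {r r₁ r₂ r₃ L : ℝ}

lemma strictAntiOn_arctan_sqrt_div_sqrt :
    StrictAntiOn (fun lam ↦ arctan (√(-r - lam) / √(r₂ + lam))) (Ioc (-r₂) (-r)) := by
  intro x hx y hy hxy
  apply arctan_strictMono
  have hsx : 0 < √(r₂ + x) := sqrt_pos.2 (by linarith [hx.1])
  calc √(-r - y) / √(r₂ + y)
      ≤ √(-r - x) / √(r₂ + y) := by gcongr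
    _ < √(-r - x) / √(r₂ + x) := by
        apply div_lt_div_of_pos_left (sqrt_pos.2 (by linarith [hy.2])) hsx
        exact sqrt_lt_sqrt (by linarith [hx.1]) (by linarith)

lemma phase_strictMonoOn (hL : 0 ≤ L) :
    StrictMonoOn (phase r₁ r₂ r₃ L) (Ioc (-r₂) (-max r₁ r₃)) := by
  intro x hx y hy hxy
  have h₁ := strictAntiOn_arctan_sqrt_div_sqrt (r := r₁) (r₂ := r₂)
    ⟨hx.1, hx.2.trans (by simp)⟩ ⟨hy.1, hy.2.trans (by simp)⟩ hxy
  have h₃ := strictAntiOn_arctan_sqrt_div_sqrt (r := r₃) (r₂ := r₂)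
    ⟨hx.1, hx.2.trans (by simp)⟩ ⟨hy.1, hy.2.trans (by simp)⟩ hxy
  have hs : L * √(r₂ + x) ≤ L * √(r₂ + y) := by gcongr
  simp only [phase]
  linarith

lemma continuousOn_phase : ContinuousOn (phase r₁ r₂ r₃ L) (Ioi (-r₂)) := by
  have hs : ∀ lam ∈ Ioi (-r₂), √(r₂ + lam) ≠ 0 := fun lam h ↦
    (sqrt_pos.2 (by linarith [mem_Ioi.1 h])).ne'
  unfold phase
  fun_prop (disch := exact hs)

lemma tendsto_arctan_sqrt_div_sqrt (h : r < r₂) :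
    Tendsto (fun lam ↦ arctan (√(-r - lam) / √(r₂ + lam))) (𝓝[>] (-r₂)) (𝓝 (π / 2)) := by
  have hnum : Tendsto (fun lam ↦ √(-r - lam)) (𝓝[>] (-r₂)) (𝓝 √(-r - -r₂)) :=
    tendsto_nhdsWithin_of_tendsto_nhds ((by fun_prop : Continuous fun lam ↦ √(-r - lam)).tendsto _)
  have hden : Tendsto (fun lam ↦ √(r₂ + lam)) (𝓝[>] (-r₂)) (𝓝[>] 0) := by
    refine tendsto_nhdsWithin_iff.2 ⟨tendsto_nhdsWithin_of_tendsto_nhds ?_, ?_⟩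
    · simpa using (by fun_prop : Continuous fun lam ↦ √(r₂ + lam)).tendsto (-r₂)
    · filter_upwards [self_mem_nhdsWithin] with lam hlam
      exact sqrt_pos.2 (by linarith [mem_Ioi.1 hlam])
  have := hnum.pos_mul_atTop (sqrt_pos.2 (by linarith)) (tendsto_inv_nhdsGT_zero.comp hden)
  exact (tendsto_arctan_atTop.mono_right nhdsWithin_le_nhds).comp this

lemma tendsto_phase (h₁ : r₁ < r₂) (h₃ : r₃ < r₂) :
    Tendsto (phase r₁ r₂ r₃ L) (𝓝[>] (-r₂)) (𝓝 (-π)) := by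
  have hs : Tendsto (fun lam ↦ L * √(r₂ + lam)) (𝓝[>] (-r₂)) (𝓝 0) := by
    apply tendsto_nhdsWithin_of_tendsto_nhds
    simpa using (by fun_prop : Continuous fun lam ↦ L * √(r₂ + lam)).tendsto (-r₂)
  rw [show -π = 0 - π / 2 - π / 2 by ring]
  exact (hs.sub (tendsto_arctan_sqrt_div_sqrt h₁)).sub (tendsto_arctan_sqrt_div_sqrt h₃)

lemma phase_neg_max : phase r₁ r₂ r₃ L (-max r₁ r₃) =
    L * √(r₂ - max r₁ r₃) - arctan (√|r₁ - r₃| / √(r₂ - max r₁ r₃)) := by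
  rcases le_total r₁ r₃ with h | h
  · simp [phase, max_eq_right h, abs_of_nonpos (sub_nonpos.2 h), neg_add_eq_sub, ← sub_eq_add_neg]
  · simp [phase, max_eq_left h, abs_of_nonneg (sub_nonneg.2 h), neg_add_eq_sub, ← sub_eq_add_neg]

lemma phase_pi_sq_div_sq_pos (hL : 0 < L) : 0 < phase r₁ r₂ r₃ L (π ^ 2 / L ^ 2 - r₂) := by
  have hs : √(r₂ + (π ^ 2 / L ^ 2 - r₂)) = π / L := by
    rw [add_sub_cancel, ← div_pow, sqrt_sq (by positivity)]
  rw [phase, hs, mul_div_cancel₀ _ hL.ne']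
  linarith [arctan_lt_pi_div_two (√(-r₁ - (π ^ 2 / L ^ 2 - r₂)) / (π / L)),
    arctan_lt_pi_div_two (√(-r₃ - (π ^ 2 / L ^ 2 - r₂)) / (π / L))]

lemma phase_min_pos (hL : 0 < L)
    (h : arctan (√|r₁ - r₃| / √(r₂ - max r₁ r₃)) < L * √(r₂ - max r₁ r₃)) :
    0 < phase r₁ r₂ r₃ L (min (-max r₁ r₃) (π ^ 2 / L ^ 2 - r₂)) := by
  rcases min_choice (-max r₁ r₃) (π ^ 2 / L ^ 2 - r₂) with hmin | hmin <;> rw [hmin]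
  · rw [phase_neg_max]
    linarith
  · exact phase_pi_sq_div_sq_pos hL

lemma sq_sub_mul_div_eq_cot {s a b : ℝ} (hs : 0 < s) :
    (s ^ 2 - a * b) / (s * (a + b)) = cot (arctan (a / s) + arctan (b / s)) := by
  rw [cot_arctan_add]
  field_simp

lemma cot_sub_eq_zero_iff_phase_eq_zero {lam : ℝ} (hL : 0 < L)
    (hlam : lam ∈ Ioo (-r₂) (min (-max r₁ r₃) (π ^ 2 / L ^ 2 - r₂))) :
    cot (L * √(r₂ + lam)) - (r₂ + lam - √((r₁ + lam) * (r₃ + lam)))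
        / (√(r₂ + lam) * (√(-r₁ - lam) + √(-r₃ - lam))) = 0 ↔ phase r₁ r₂ r₃ L lam = 0 := by
  obtain ⟨hlo, hhi⟩ := hlam
  simp only [lt_min_iff, lt_neg, max_lt_iff] at hhi
  obtain ⟨⟨h₁, h₃⟩, hπ⟩ := hhi
  have hs : 0 < √(r₂ + lam) := sqrt_pos.2 (by linarith)
  have ha : 0 < √(-r₁ - lam) := sqrt_pos.2 (by linarith)
  have hb : 0 < √(-r₃ - lam) := sqrt_pos.2 (by linarith)
  have hprod : √((r₁ + lam) * (r₃ + lam)) = √(-r₁ - lam) * √(-r₃ - lam) := by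
    rw [← sqrt_mul (by linarith)]
    ring_nf
  have hLs : L * √(r₂ + lam) ∈ Ioo 0 π := by
    refine ⟨by positivity, ?_⟩
    rw [← lt_div_iff₀' hL, sqrt_lt' (by positivity), div_pow]
    linarith
  have hcot := sq_sub_mul_div_eq_cot (a := √(-r₁ - lam)) (b := √(-r₃ - lam)) hs
  rw [sq_sqrt (by linarith)] at hcot
  rw [hprod, hcot, sub_eq_zero,
    injOn_cot.eq_iff hLs (arctan_add_arctan_mem_Ioo (div_pos ha hs) (div_pos hb hs)), phase]
  constructor <;> intro h <;> linarith

lemma arctan_lt_of_Lbar_lt (h : max r₁ r₃ < r₂)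
    (hL : (if r₁ = r₃ then 0 else arccot (√((r₂ - max r₁ r₃) / |r₁ - r₃|))
      / √(r₂ - max r₁ r₃)) < L) :
    arctan (√|r₁ - r₃| / √(r₂ - max r₁ r₃)) < L * √(r₂ - max r₁ r₃) := by
  rw [← div_lt_iff₀ (sqrt_pos.2 (sub_pos.2 h))]
  split_ifs at hL with h₁₃
  · simpa [h₁₃] using hL
  · rwa [arccot_sqrt_div (sub_pos.2 h) (abs_pos.2 (sub_ne_zero.2 h₁₃))] at hL

end Phase

theorem G_unique_zero_general (r₁ r₂ r₃ L : ℝ)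
    (h2 : max r₁ r₃ < r₂)
    (Lbar : ℝ)
    (hLbar : Lbar = if r₁ = r₃ then 0 else
      arccot (Real.sqrt ((r₂ - max r₁ r₃) / |r₁ - r₃|))
        / Real.sqrt (r₂ - max r₁ r₃))
    (hL : Lbar < L)
    (G : ℝ → ℝ)
    (hG : ∀ lam, G lam = Real.cot (L * Real.sqrt (r₂ + lam))
        - (r₂ + lam - Real.sqrt ((r₁ + lam) * (r₃ + lam)))
          / (Real.sqrt (r₂ + lam) * (Real.sqrt (-r₁ - lam) + Real.sqrt (-r₃ - lam)))) :
    ∃! lam : ℝ,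
      lam ∈ Set.Ioo (-r₂) (min (-(max r₁ r₃)) (Real.pi ^ 2 / L ^ 2 - r₂)) ∧
        G lam = 0 := by
  have hLbar_lt := arctan_lt_of_Lbar_lt h2 (hLbar ▸ hL)
  have hLpos : 0 < L := pos_of_mul_pos_left
    ((arctan_nonneg.2 (by positivity)).trans_lt hLbar_lt) (sqrt_nonneg _)
  have hG0 : ∀ lam ∈ Ioo (-r₂) (min (-max r₁ r₃) (π ^ 2 / L ^ 2 - r₂)),
      G lam = 0 ↔ phase r₁ r₂ r₃ L lam = 0 := fun lam hlam ↦
    hG lam ▸ cot_sub_eq_zero_iff_phase_eq_zero hLpos hlam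
  have hmono :
      StrictMonoOn (phase r₁ r₂ r₃ L) (Ioc (-r₂) (min (-max r₁ r₃) (π ^ 2 / L ^ 2 - r₂))) :=
    (phase_strictMonoOn hLpos.le).mono (Ioc_subset_Ioc_right (min_le_left _ _))
  have hlt : -r₂ < min (-max r₁ r₃) (π ^ 2 / L ^ 2 - r₂) :=
    lt_min (neg_lt_neg h2) (by linarith [show 0 < π ^ 2 / L ^ 2 by positivity])
  obtain ⟨c, hc, hc0⟩ := exists_mem_Ioo_eq_zero_of_tendsto hlt
    (continuousOn_phase.mono Ioc_subset_Ioi_self)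
    (tendsto_phase (lt_of_le_of_lt (le_max_left _ _) h2) (lt_of_le_of_lt (le_max_right _ _) h2))
    (neg_neg_of_pos pi_pos) (phase_min_pos hLpos hLbar_lt)
  refine ⟨c, ⟨hc, (hG0 c hc).2 hc0⟩, fun lam ⟨hlam, hGlam⟩ ↦ ?_⟩
  exact hmono.injOn (Ioo_subset_Ioc_self hlam) (Ioo_subset_Ioc_self hc)
    (((hG0 lam hlam).1 hGlam).trans hc0.symm)

theorem G_unique_zero (r₁ r₂ r₃ L : ℝ) (h1 : 0 < r₁) (h3 : 0 < r₃)
    (h2 : max r₁ r₃ < r₂)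
    (Lbar : ℝ)
    (hLbar : Lbar = if r₁ = r₃ then 0 else
      arccot (Real.sqrt ((r₂ - max r₁ r₃) / |r₁ - r₃|))
        / Real.sqrt (r₂ - max r₁ r₃))
    (hL : Lbar < L)
    (G : ℝ → ℝ)
    (hG : ∀ lam, G lam = Real.cot (L * Real.sqrt (r₂ + lam))
        - (r₂ + lam - Real.sqrt ((r₁ + lam) * (r₃ + lam)))
          / (Real.sqrt (r₂ + lam) * (Real.sqrt (-r₁ - lam) + Real.sqrt (-r₃ - lam)))) :
    ∃! lam : ℝ,
      lam ∈ Set.Ioo (-r₂) (min (-(max r₁ r₃)) (Real.pi ^ 2 / L ^ 2 - r₂)) ∧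
        G lam = 0 :=
  G_unique_zero_general r₁ r₂ r₃ L h2 Lbar hLbar hL G hG
end

section
/- Let 0 < r₁ < r₃ < r₂ and λ₁ = -r₃. With L, C₃ as above satisfying 0 < C₃ < L√(r₂-r₃) + C₃ ≤ π/2, the function φ defined by φ(y) = exp(L√(r₃-r₁)·y) for y ≤ 0, φ(y) = sin(L√(r₂-r₃)·y + C₃)/sin(C₃) for 0 < y < 1, and φ(y) = C₄·L·(y-1) + C₅ for y ≥ 1, where C₄ = √(r₂-r₃)·cos(L√(r₂-r₃)+C₃)/sin(C₃) and C₅ = sin(L√(r₂-r₃)+C₃)/sin(C₃), is positive on ℝ, continuously differentiable, and satisfies -φ''(y)/L² - m(y)φ(y) = -r₃·φ(y) on each of the three open regions y < 0, 0 < y < 1, y > 1, where m(y) = r₁ for y < 0, r₂ for 0 ≤ y < 1, r₃ for y ≥ 1. -/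
/-!
On each of the three intervals `φ` solves a constant-coefficient equation `φ'' = L² (r₃ - m) φ`,
so it is an exponential, a sine or an affine function there. The phase `C₃` is chosen
(`cot C₃ = √((r₃ - r₁)/(r₂ - r₃))`) so that the slopes of the exponential and of the sine agree
at `0`, and the affine piece is the tangent line of the sine at `1`; hence `φ` is `C¹`.
Positivity comes from `0 < L √(r₂ - r₃) y + C₃ ≤ π / 2` on `(0, 1)`, which also makes the slope
of the affine piece nonnegative.
-/

open Real Filter Topology

section Piecewise

theorem ite_lt_eq_ite_le {α β : Type*} [LinearOrder α] {f g : α → β} {c : α} (h : f c = g c)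
    (y : α) : (if y < c then f y else g y) = if y ≤ c then f y else g y := by
  rcases lt_trichotomy y c with hy | rfl | hy
  · simp [hy, hy.le]
  · simp [h]
  · simp [not_lt.mpr hy.le, not_le.mpr hy]

theorem ite_le_eventuallyEq_of_lt {α : Type*} {f g : ℝ → α} {c x : ℝ} (hx : x < c) :
    (fun y => if y ≤ c then f y else g y) =ᶠ[𝓝 x] f := by
  filter_upwards [Iio_mem_nhds hx] with y hy
  simp [(Set.mem_Iio.mp hy).le]

theorem ite_le_eventuallyEq_of_gt {α : Type*} {f g : ℝ → α} {c x : ℝ} (hx : c < x) :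
    (fun y => if y ≤ c then f y else g y) =ᶠ[𝓝 x] g := by
  filter_upwards [Ioi_mem_nhds hx] with y hy
  simp [not_le.mpr (Set.mem_Ioi.mp hy)]

theorem continuous_ite_le {α : Type*} [TopologicalSpace α] {f g : ℝ → α} {c : ℝ}
    (hf : Continuous f) (hg : Continuous g) (hfg : f c = g c) :
    Continuous fun y => if y ≤ c then f y else g y :=
  hf.if_le hg continuous_id continuous_const fun _ hx => hx ▸ hfg

variable {F : Type*} [NormedAddCommGroup F] [NormedSpace ℝ F] {f g : ℝ → F} {c : ℝ}

theorem HasDerivAt.ite_le_of_eq {d : F} (hf : HasDerivAt f d c) (hg : HasDerivAt g d c)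
    (hfg : f c = g c) : HasDerivAt (fun y => if y ≤ c then f y else g y) d c := by
  have hleft : HasDerivWithinAt (fun y => if y ≤ c then f y else g y) d (Set.Iic c) c :=
    hf.hasDerivWithinAt.congr (fun y hy => if_pos hy) (if_pos le_rfl)
  have hright : HasDerivWithinAt (fun y => if y ≤ c then f y else g y) d (Set.Ici c) c :=
    hg.hasDerivWithinAt.congr (fun y hy => by
      rcases (Set.mem_Ici.mp hy).eq_or_lt with rfl | hy
      · simp [hfg]
      · simp [not_le.mpr hy]) (by simp [hfg])
  simpa using (hleft.union hright).hasDerivAt (by simp)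

theorem hasDerivAt_ite_le {f' g' : ℝ → F} (hf : ∀ x, HasDerivAt f (f' x) x)
    (hg : ∀ x, HasDerivAt g (g' x) x) (hfg : f c = g c) (hfg' : f' c = g' c) (x : ℝ) :
    HasDerivAt (fun y => if y ≤ c then f y else g y) (if x ≤ c then f' x else g' x) x := by
  rcases lt_trichotomy x c with hx | rfl | hx
  · simpa [hx.le] using (hf x).congr_of_eventuallyEq (ite_le_eventuallyEq_of_lt hx)
  · simpa using (hf x).ite_le_of_eq (hfg' ▸ hg x) hfg
  · simpa [not_le.mpr hx] using (hg x).congr_of_eventuallyEq (ite_le_eventuallyEq_of_gt hx)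

end Piecewise

theorem hasDerivAt_exp_mul (a y : ℝ) :
    HasDerivAt (fun t => exp (a * t)) (a * exp (a * y)) y := by
  simpa [mul_comm] using ((hasDerivAt_id y).const_mul a).exp

theorem hasDerivAt_sin_mul_add (b C y : ℝ) :
    HasDerivAt (fun t => sin (b * t + C)) (b * cos (b * y + C)) y := by
  simpa [mul_comm] using (((hasDerivAt_id y).const_mul b).add_const C).sin

theorem hasDerivAt_cos_mul_add (b C y : ℝ) :
    HasDerivAt (fun t => cos (b * t + C)) (-(b * sin (b * y + C))) y := by
  simpa [mul_comm] using (((hasDerivAt_id y).const_mul b).add_const C).cos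

/-- The paper's `φ` with `a = L √(r₃ - r₁)`, `b = L √(r₂ - r₃)`, `C = C₃`, `k = C₄ L`, `c = C₅`. -/
noncomputable def eigenfunction (a b C k c y : ℝ) : ℝ :=
  if y ≤ 0 then exp (a * y) else if y < 1 then sin (b * y + C) / sin C else k * (y - 1) + c

noncomputable def eigenfunctionDeriv (a b C k y : ℝ) : ℝ :=
  if y ≤ 0 then a * exp (a * y) else if y ≤ 1 then b * cos (b * y + C) / sin C else k

section Eigenfunction

variable {a b C k c y : ℝ}

theorem eigenfunction_pos (hb : 0 ≤ b) (hC : 0 < C) (hbC : b + C ≤ π / 2)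
    (hk : k = b * cos (b + C) / sin C) (hc : c = sin (b + C) / sin C) (y : ℝ) :
    0 < eigenfunction a b C k c y := by
  have hsinC : 0 < sin C := sin_pos_of_pos_of_lt_pi hC (by linarith [pi_pos])
  unfold eigenfunction
  split_ifs with h0 h1
  · exact exp_pos _
  · push Not at h0
    have hby : b * y ≤ b := mul_le_of_le_one_right hb h1.le
    exact div_pos (sin_pos_of_pos_of_lt_pi (by positivity) (by linarith [pi_pos])) hsinC
  · push Not at h0 h1
    have hk0 : 0 ≤ k :=
      hk ▸ div_nonneg (mul_nonneg hb (cos_nonneg_of_mem_Icc ⟨by linarith, hbC⟩)) hsinC.le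
    have hc0 : 0 < c :=
      hc ▸ div_pos (sin_pos_of_pos_of_lt_pi (by linarith) (by linarith [pi_pos])) hsinC
    nlinarith

theorem eigenfunction_eq_ite_le (hc : c = sin (b + C) / sin C) :
    eigenfunction a b C k c = fun y => if y ≤ 0 then exp (a * y)
      else if y ≤ 1 then sin (b * y + C) / sin C else k * (y - 1) + c := by
  funext y
  unfold eigenfunction
  rw [ite_lt_eq_ite_le (f := fun y => sin (b * y + C) / sin C) (g := fun y => k * (y - 1) + c)
    (by simp [hc])]

theorem hasDerivAt_eigenfunction (hs : sin C ≠ 0) (ha : a = b * cot C)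
    (hk : k = b * cos (b + C) / sin C) (hc : c = sin (b + C) / sin C) (y : ℝ) :
    HasDerivAt (eigenfunction a b C k c) (eigenfunctionDeriv a b C k y) y := by
  have hsine (y : ℝ) :
      HasDerivAt (fun t => sin (b * t + C) / sin C) (b * cos (b * y + C) / sin C) y :=
    (hasDerivAt_sin_mul_add b C y).div_const _
  have haffine (y : ℝ) : HasDerivAt (fun t => k * (t - 1) + c) k y := by
    simpa using (((hasDerivAt_id y).sub_const 1).const_mul k).add_const c
  rw [eigenfunction_eq_ite_le hc]
  exact hasDerivAt_ite_le (hasDerivAt_exp_mul a)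
    (hasDerivAt_ite_le hsine haffine (by simp [hc]) (by simp [hk])) (by simp [hs])
    (by simp [ha, cot_eq_cos_div_sin, mul_div_assoc]) y

theorem contDiff_one_eigenfunction (hs : sin C ≠ 0) (ha : a = b * cot C)
    (hk : k = b * cos (b + C) / sin C) (hc : c = sin (b + C) / sin C) :
    ContDiff ℝ 1 (eigenfunction a b C k c) := by
  have hderiv := hasDerivAt_eigenfunction hs ha hk hc
  have hcont : Continuous (eigenfunctionDeriv a b C k) :=
    continuous_ite_le (by fun_prop) (continuous_ite_le (by fun_prop) continuous_const
      (by simp [hk])) (by simp [ha, cot_eq_cos_div_sin, mul_div_assoc])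
  rw [contDiff_one_iff_deriv, funext fun y => (hderiv y).deriv]
  exact ⟨fun y => (hderiv y).differentiableAt, hcont⟩

theorem deriv_deriv_eigenfunction_of_neg (hy : y < 0) :
    deriv (deriv (eigenfunction a b C k c)) y = a ^ 2 * eigenfunction a b C k c y := by
  have hloc : eigenfunction a b C k c =ᶠ[𝓝 y] fun t => exp (a * t) :=
    ite_le_eventuallyEq_of_lt hy
  rw [hloc.deriv.deriv_eq, funext fun t => (hasDerivAt_exp_mul a t).deriv,
    ((hasDerivAt_exp_mul a y).const_mul a).deriv, hloc.eq_of_nhds]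
  ring

theorem deriv_deriv_eigenfunction_of_mem_Ioo (h0 : 0 < y) (h1 : y < 1) :
    deriv (deriv (eigenfunction a b C k c)) y = -b ^ 2 * eigenfunction a b C k c y := by
  have hloc : eigenfunction a b C k c =ᶠ[𝓝 y] fun t => sin (b * t + C) / sin C := by
    filter_upwards [Ioo_mem_nhds h0 h1] with t ht
    simp [eigenfunction, not_le.mpr ht.1, ht.2]
  rw [hloc.deriv.deriv_eq,
    funext fun t => ((hasDerivAt_sin_mul_add b C t).div_const (sin C)).deriv,
    (((hasDerivAt_cos_mul_add b C y).const_mul b).div_const (sin C)).deriv, hloc.eq_of_nhds]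
  ring

theorem deriv_deriv_eigenfunction_of_one_lt (hy : 1 < y) :
    deriv (deriv (eigenfunction a b C k c)) y = 0 := by
  have hloc : eigenfunction a b C k c =ᶠ[𝓝 y] fun t => k * (t - 1) + c := by
    filter_upwards [Ioi_mem_nhds hy] with t (ht : 1 < t)
    simp [eigenfunction, not_le.mpr (zero_lt_one.trans ht), not_lt.mpr ht.le]
  rw [hloc.deriv.deriv_eq]
  simp

end Eigenfunction

theorem neg_div_sq_sub_mul_eq {L u v m e : ℝ} (hL : L ≠ 0) (h : u = L ^ 2 * (e - m) * v) :
    -u / L ^ 2 - m * v = -e * v := by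
  subst h
  field_simp
  ring

theorem eigenfunction_case2_general (r₁ r₂ r₃ L C₃ : ℝ)
    (h13 : r₁ < r₃) (h32 : r₃ < r₂) (hL : 0 < L)
    (hC₃ : 0 < C₃)
    (hle : L * Real.sqrt (r₂ - r₃) + C₃ ≤ Real.pi / 2)
    (hcot : Real.cot C₃ = Real.sqrt ((r₃ - r₁) / (r₂ - r₃)))
    (C₄ C₅ : ℝ)
    (hC₄ : C₄ = Real.sqrt (r₂ - r₃) * Real.cos (L * Real.sqrt (r₂ - r₃) + C₃) / Real.sin C₃)
    (hC₅ : C₅ = Real.sin (L * Real.sqrt (r₂ - r₃) + C₃) / Real.sin C₃)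
    (φ m : ℝ → ℝ)
    (hφ : ∀ y, φ y = if y ≤ 0 then Real.exp (L * Real.sqrt (r₃ - r₁) * y)
        else if y < 1 then Real.sin (L * Real.sqrt (r₂ - r₃) * y + C₃) / Real.sin C₃
        else C₄ * L * (y - 1) + C₅)
    (hm : ∀ y, m y = if y < 0 then r₁ else if y < 1 then r₂ else r₃) :
    (∀ y, 0 < φ y) ∧ ContDiff ℝ 1 φ ∧
      (∀ y, y < 0 →
        -(deriv (deriv φ) y) / L ^ 2 - m y * φ y = -r₃ * φ y) ∧
      (∀ y, 0 < y → y < 1 →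
        -(deriv (deriv φ) y) / L ^ 2 - m y * φ y = -r₃ * φ y) ∧
      (∀ y, 1 < y →
        -(deriv (deriv φ) y) / L ^ 2 - m y * φ y = -r₃ * φ y) := by
  set a := L * √(r₃ - r₁)
  set b := L * √(r₂ - r₃) with hb_def
  obtain rfl : φ = eigenfunction a b C₃ (C₄ * L) C₅ := funext hφ
  have hb : 0 ≤ b := by positivity
  have hsin : sin C₃ ≠ 0 := (sin_pos_of_pos_of_lt_pi hC₃ (by linarith [pi_pos])).ne'
  have ha : a = b * cot C₃ := by
    rw [hcot, hb_def, mul_assoc, ← sqrt_mul (by linarith), mul_div_cancel₀ _ (by linarith)]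
  have hk : C₄ * L = b * cos (b + C₃) / sin C₃ := by rw [hC₄]; ring
  have ha2 : a ^ 2 = L ^ 2 * (r₃ - r₁) := by rw [mul_pow, sq_sqrt (by linarith)]
  have hb2 : b ^ 2 = L ^ 2 * (r₂ - r₃) := by rw [mul_pow, sq_sqrt (by linarith)]
  refine ⟨eigenfunction_pos hb hC₃ hle hk hC₅, contDiff_one_eigenfunction hsin ha hk hC₅,
    fun y hy => ?_, fun y h0 h1 => ?_, fun y hy => ?_⟩
  · rw [hm, if_pos hy]
    exact neg_div_sq_sub_mul_eq hL.ne' (by rw [deriv_deriv_eigenfunction_of_neg hy, ha2])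
  · rw [hm, if_neg (not_lt.mpr h0.le), if_pos h1]
    refine neg_div_sq_sub_mul_eq hL.ne' ?_
    rw [deriv_deriv_eigenfunction_of_mem_Ioo h0 h1, hb2]
    ring
  · rw [hm, if_neg (by linarith), if_neg (not_lt.mpr hy.le)]
    exact neg_div_sq_sub_mul_eq hL.ne' (by rw [deriv_deriv_eigenfunction_of_one_lt hy]; ring)

theorem eigenfunction_case2 (r₁ r₂ r₃ L C₃ : ℝ)
    (h1 : 0 < r₁) (h13 : r₁ < r₃) (h32 : r₃ < r₂) (hL : 0 < L)
    (hC₃ : 0 < C₃) (hsum : C₃ < L * Real.sqrt (r₂ - r₃) + C₃)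
    (hle : L * Real.sqrt (r₂ - r₃) + C₃ ≤ Real.pi / 2)
    (hcot : Real.cot C₃ = Real.sqrt ((r₃ - r₁) / (r₂ - r₃)))
    (C₄ C₅ : ℝ)
    (hC₄ : C₄ = Real.sqrt (r₂ - r₃) * Real.cos (L * Real.sqrt (r₂ - r₃) + C₃) / Real.sin C₃)
    (hC₅ : C₅ = Real.sin (L * Real.sqrt (r₂ - r₃) + C₃) / Real.sin C₃)
    (φ m : ℝ → ℝ)
    (hφ : ∀ y, φ y = if y ≤ 0 then Real.exp (L * Real.sqrt (r₃ - r₁) * y)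
        else if y < 1 then Real.sin (L * Real.sqrt (r₂ - r₃) * y + C₃) / Real.sin C₃
        else C₄ * L * (y - 1) + C₅)
    (hm : ∀ y, m y = if y < 0 then r₁ else if y < 1 then r₂ else r₃) :
    (∀ y, 0 < φ y) ∧ ContDiff ℝ 1 φ ∧
      (∀ y, y < 0 →
        -(deriv (deriv φ) y) / L ^ 2 - m y * φ y = -r₃ * φ y) ∧
      (∀ y, 0 < y → y < 1 →
        -(deriv (deriv φ) y) / L ^ 2 - m y * φ y = -r₃ * φ y) ∧
      (∀ y, 1 < y →
        -(deriv (deriv φ) y) / L ^ 2 - m y * φ y = -r₃ * φ y) :=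
  eigenfunction_case2_general r₁ r₂ r₃ L C₃ h13 h32 hL hC₃ hle hcot C₄ C₅ hC₄ hC₅ φ m hφ hm
end

section
/- Let r₁, r₂, r₃ be positive reals with r₂ > max(r₁, r₃) and let L₀ = (π/2)·√((2r₂ - r₁ - r₃)/((r₂-r₁)(r₂-r₃))). Then λ₁ := -(r₂² - r₁r₃)/(2r₂ - r₁ - r₃) satisfies: (i) -r₂ < λ₁ < -max(r₁,r₃); (ii) L₀√(r₂+λ₁) = π/2; (iii) r₂ + λ₁ = √((r₁+λ₁)(r₃+λ₁)); and consequently λ₁ solves the equation cot(L₀√(r₂+λ₁)) = (r₂+λ₁ - √((r₁+λ₁)(r₃+λ₁)))/(√(r₂+λ₁)(√(-r₁-λ₁)+√(-r₃-λ₁))). -/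
/-!
With `a = r₂ - r₁`, `b = r₂ - r₃` and `λ₁` as given, one computes `r₂ + λ₁ = ab/(a+b)`,
`r₁ + λ₁ = -a²/(a+b)` and `r₃ + λ₁ = -b²/(a+b)`. Hence `(r₁+λ₁)(r₃+λ₁) = (r₂+λ₁)²`, which is (iii),
and `L₀² (r₂+λ₁) = (π/2)²`, which is (ii). Then the cotangent equation says `0 = 0`.
-/

open Real

noncomputable def criticalShift (r₁ r₂ r₃ : ℝ) : ℝ :=
  -((r₂ ^ 2 - r₁ * r₃) / (2 * r₂ - r₁ - r₃))

section criticalShift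

variable {r₁ r₂ r₃ : ℝ}

theorem criticalShift_comm (r₁ r₂ r₃ : ℝ) : criticalShift r₃ r₂ r₁ = criticalShift r₁ r₂ r₃ := by
  unfold criticalShift
  ring_nf

theorem add_criticalShift_middle (hD : 2 * r₂ - r₁ - r₃ ≠ 0) :
    r₂ + criticalShift r₁ r₂ r₃ = (r₂ - r₁) * (r₂ - r₃) / (2 * r₂ - r₁ - r₃) := by
  rw [criticalShift, eq_div_iff hD, add_mul, neg_mul, div_mul_cancel₀ _ hD]
  ring

theorem add_criticalShift_left (hD : 2 * r₂ - r₁ - r₃ ≠ 0) :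
    r₁ + criticalShift r₁ r₂ r₃ = -((r₂ - r₁) ^ 2 / (2 * r₂ - r₁ - r₃)) := by
  rw [criticalShift, ← neg_div, ← neg_div, eq_div_iff hD, add_mul, div_mul_cancel₀ _ hD]
  ring

theorem add_criticalShift_right (hD : 2 * r₂ - r₁ - r₃ ≠ 0) :
    r₃ + criticalShift r₁ r₂ r₃ = -((r₂ - r₃) ^ 2 / (2 * r₂ - r₁ - r₃)) := by
  rw [← criticalShift_comm, add_criticalShift_left (by rwa [sub_right_comm]), sub_right_comm]

theorem mul_add_criticalShift_eq_sq (hD : 2 * r₂ - r₁ - r₃ ≠ 0) :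
    (r₁ + criticalShift r₁ r₂ r₃) * (r₃ + criticalShift r₁ r₂ r₃)
      = (r₂ + criticalShift r₁ r₂ r₃) ^ 2 := by
  rw [add_criticalShift_left hD, add_criticalShift_right hD, add_criticalShift_middle hD]
  field_simp

end criticalShift

theorem Real.sqrt_div_mul_sqrt_div_self {x y : ℝ} (hx : 0 < x) (hy : 0 < y) :
    √(x / y) * √(y / x) = 1 := by
  rw [← Real.sqrt_mul (by positivity), div_mul_div_comm, mul_comm y, div_self (by positivity),
    Real.sqrt_one]

theorem explicit_eigenvalue_general (r₁ r₂ r₃ : ℝ)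
    (h2 : max r₁ r₃ < r₂)
    (L₀ lam1 : ℝ)
    (hL₀ : L₀ = (Real.pi / 2) * Real.sqrt ((2 * r₂ - r₁ - r₃) / ((r₂ - r₁) * (r₂ - r₃))))
    (hlam1 : lam1 = -((r₂ ^ 2 - r₁ * r₃) / (2 * r₂ - r₁ - r₃))) :
    (-r₂ < lam1 ∧ lam1 < -(max r₁ r₃)) ∧
      L₀ * Real.sqrt (r₂ + lam1) = Real.pi / 2 ∧
      r₂ + lam1 = Real.sqrt ((r₁ + lam1) * (r₃ + lam1)) ∧
      Real.cot (L₀ * Real.sqrt (r₂ + lam1))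
        = (r₂ + lam1 - Real.sqrt ((r₁ + lam1) * (r₃ + lam1)))
          / (Real.sqrt (r₂ + lam1) * (Real.sqrt (-r₁ - lam1) + Real.sqrt (-r₃ - lam1))) := by
  obtain ⟨ha, hb⟩ := max_lt_iff.mp h2
  replace ha : 0 < r₂ - r₁ := sub_pos.mpr ha
  replace hb : 0 < r₂ - r₃ := sub_pos.mpr hb
  have hD : 0 < 2 * r₂ - r₁ - r₃ := by linarith
  change lam1 = criticalShift r₁ r₂ r₃ at hlam1
  subst hlam1
  have hmiddle := add_criticalShift_middle hD.ne'
  have hpos : 0 < r₂ + criticalShift r₁ r₂ r₃ := hmiddle ▸ by positivity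
  have hleft : r₁ + criticalShift r₁ r₂ r₃ < 0 := by
    rw [add_criticalShift_left hD.ne', neg_lt_zero]; positivity
  have hright : r₃ + criticalShift r₁ r₂ r₃ < 0 := by
    rw [add_criticalShift_right hD.ne', neg_lt_zero]; positivity
  have hiii : r₂ + criticalShift r₁ r₂ r₃
      = √((r₁ + criticalShift r₁ r₂ r₃) * (r₃ + criticalShift r₁ r₂ r₃)) := by
    rw [mul_add_criticalShift_eq_sq hD.ne', Real.sqrt_sq hpos.le]
  have hii : L₀ * √(r₂ + criticalShift r₁ r₂ r₃) = π / 2 := by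
    rw [hL₀, hmiddle, mul_assoc, Real.sqrt_div_mul_sqrt_div_self hD (by positivity), mul_one]
  refine ⟨⟨by linarith, lt_neg.mpr (max_lt (by linarith) (by linarith))⟩, hii, hiii, ?_⟩
  rw [hii, Real.cot_eq_cos_div_sin, Real.cos_pi_div_two, zero_div, ← hiii, sub_self, zero_div]

theorem explicit_eigenvalue (r₁ r₂ r₃ : ℝ)
    (h1 : 0 < r₁) (h3 : 0 < r₃) (h2 : max r₁ r₃ < r₂)
    (L₀ lam1 : ℝ)
    (hL₀ : L₀ = (Real.pi / 2) * Real.sqrt ((2 * r₂ - r₁ - r₃) / ((r₂ - r₁) * (r₂ - r₃))))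
    (hlam1 : lam1 = -((r₂ ^ 2 - r₁ * r₃) / (2 * r₂ - r₁ - r₃))) :
    (-r₂ < lam1 ∧ lam1 < -(max r₁ r₃)) ∧
      L₀ * Real.sqrt (r₂ + lam1) = Real.pi / 2 ∧
      r₂ + lam1 = Real.sqrt ((r₁ + lam1) * (r₃ + lam1)) ∧
      Real.cot (L₀ * Real.sqrt (r₂ + lam1))
        = (r₂ + lam1 - Real.sqrt ((r₁ + lam1) * (r₃ + lam1)))
          / (Real.sqrt (r₂ + lam1) * (Real.sqrt (-r₁ - lam1) + Real.sqrt (-r₃ - lam1))) :=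
  explicit_eigenvalue_general r₁ r₂ r₃ h2 L₀ lam1 hL₀ hlam1
end

section
/- Let 0 < r₁, λ₁ < -r₁, and let c*₁ = F(c_{A,1}), c*₂ = F(c_{A,2}) where F(c) = (c - 2√(-λ₁-r₁))/2 + 2r₁/(c - 2√(-λ₁-r₁)) and 2√(-λ₁) < c_{A,1} < c_{A,2} < 2√r₁ + 2√(-λ₁-r₁). Then 2√r₁ < c*₂ < c*₁ < 2√(-λ₁) < c_{A,1} < c_{A,2}. -/
open Real

theorem speeds_ordering (r₁ lam1 cA1 cA2 : ℝ) (hr : 0 < r₁) (hl : lam1 < -r₁)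
    (h1 : 2 * Real.sqrt (-lam1) < cA1) (h12 : cA1 < cA2)
    (h2 : cA2 < 2 * Real.sqrt r₁ + 2 * Real.sqrt (-lam1 - r₁))
    (F : ℝ → ℝ)
    (hF : ∀ c, F c = (c - 2 * Real.sqrt (-lam1 - r₁)) / 2
        + 2 * r₁ / (c - 2 * Real.sqrt (-lam1 - r₁)))
    (c₁ c₂ : ℝ) (hc₁ : c₁ = F cA1) (hc₂ : c₂ = F cA2) :
    2 * Real.sqrt r₁ < c₂ ∧ c₂ < c₁ ∧ c₁ < 2 * Real.sqrt (-lam1) ∧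
      2 * Real.sqrt (-lam1) < cA1 ∧ cA1 < cA2 := by
  have hr1 : (0:ℝ) < -lam1 - r₁ := by linarith
  have hl1 : (0:ℝ) < -lam1 := by linarith
  set a := Real.sqrt (-lam1 - r₁) with ha
  set s := Real.sqrt r₁ with hs
  set b := Real.sqrt (-lam1) with hb
  have ha2 : a ^ 2 = -lam1 - r₁ := Real.sq_sqrt hr1.le
  have hs2 : s ^ 2 = r₁ := Real.sq_sqrt hr.le
  have hb2 : b ^ 2 = -lam1 := Real.sq_sqrt hl1.le
  have hapos : 0 < a := Real.sqrt_pos.mpr hr1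
  have hspos : 0 < s := Real.sqrt_pos.mpr hr
  have hbpos : 0 < b := Real.sqrt_pos.mpr hl1
  have hba : a < b := by nlinarith
  have hbs : s < b := by nlinarith
  set x₁ := cA1 - 2 * a with hx1
  set x₂ := cA2 - 2 * a with hx2
  have hx1b : 2 * (b - a) < x₁ := by rw [hx1]; linarith
  have hx1pos : 0 < x₁ := by nlinarith
  have hx12 : x₁ < x₂ := by rw [hx1, hx2]; linarith
  have hx2pos : 0 < x₂ := by linarith
  have hx2s : x₂ < 2 * s := by rw [hx2]; linarith
  clear_value a s b x₁ x₂
  have hc1 : c₁ = x₁ / 2 + 2 * r₁ / x₁ := by rw [hc₁, hF, ← hx1]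
  have hc2 : c₂ = x₂ / 2 + 2 * r₁ / x₂ := by rw [hc₂, hF, ← hx2]
  refine ⟨?_, ?_, ?_, h1, h12⟩
  · have key : c₂ - 2 * s = (x₂ - 2 * s) ^ 2 / (2 * x₂) := by
      rw [hc2, show r₁ = s ^ 2 from hs2.symm]; field_simp; ring
    have hne : x₂ - 2 * s ≠ 0 := by intro h; nlinarith
    have : 0 < (x₂ - 2 * s) ^ 2 / (2 * x₂) :=
      div_pos (by positivity) (by linarith)
    linarith
  · have key : c₁ - c₂ = (x₂ - x₁) * (4 * r₁ - x₁ * x₂) / (2 * x₁ * x₂) := by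
      rw [hc1, hc2]; field_simp; ring
    have h4 : x₁ * x₂ < 4 * r₁ := by nlinarith
    have : 0 < (x₂ - x₁) * (4 * r₁ - x₁ * x₂) / (2 * x₁ * x₂) :=
      div_pos (mul_pos (by linarith) (by linarith)) (by positivity)
    linarith
  · have key : 2 * b - c₁ = (2 * (b + a) - x₁) * (x₁ - 2 * (b - a)) / (2 * x₁) := by
      rw [hc1, show r₁ = b ^ 2 - a ^ 2 from by linarith]; field_simp; ring
    have hup : x₁ < 2 * (b + a) := by linarith
    have : 0 < (2 * (b + a) - x₁) * (x₁ - 2 * (b - a)) / (2 * x₁) :=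
      div_pos (mul_pos (by linarith) (by linarith)) (by linarith)
    linarith
end
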